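/- Let q be a real number with 0 < q < 1. Then the limit as n → ∞ (n ranging over positive integers) of ∑_{k=0}^{n} binom_q(n,k) · (1/[n]_q)^k exists and equals the Daehee constant e_q := ∑_{k=0}^{∞} 1/[k]_q! (which is a convergent series). -/

import Mathlib

open Filter Topology

/-- The `q`-basic number `[n]_q = (1 - q^n)/(1 - q)`. -/
noncomputable def qNum (q : ℝ) (n : ℕ) : ℝ := (1 - q ^ n) / (1 - q)

/-- The `q`-factorial `[n]_q! = [1]_q [2]_q ⋯ [n]_q`, with `[0]_q! = 1`. -/
noncomputable def qFact (q : ℝ) (n : ℕ) : ℝ := ∏ j ∈ Finset.range n, qNum q (j + 1)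

/-- The Gaussian binomial coefficient `[n]_q! / ([k]_q! [n-k]_q!)`. -/
noncomputable def qBinom (q : ℝ) (n k : ℕ) : ℝ := qFact q n / (qFact q k * qFact q (n - k))

/-- The `q`-exponential `e_q(z) = ∑ z^n / [n]_q!`. -/
noncomputable def qExp (q : ℝ) (z : ℂ) : ℂ := ∑' n : ℕ, z ^ n / (qFact q n : ℂ)

/-- The `q`-sine `sin_q(z) = ∑ (-1)^n z^(2n+1) / [2n+1]_q!`. -/
noncomputable def qSin (q : ℝ) (z : ℂ) : ℂ :=
  ∑' n : ℕ, (-1 : ℂ) ^ n * z ^ (2 * n + 1) / (qFact q (2 * n + 1) : ℂ)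

/-- The `q`-cosine `cos_q(z) = ∑ (-1)^n z^(2n) / [2n]_q!`. -/
noncomputable def qCos (q : ℝ) (z : ℂ) : ℂ :=
  ∑' n : ℕ, (-1 : ℂ) ^ n * z ^ (2 * n) / (qFact q (2 * n) : ℂ)

/-- The `q`-addition power `(x ⊕_q y)^n = ∑_{k=0}^n binom_q(n,k) x^k y^(n-k)`. -/
noncomputable def qAddPow (q : ℝ) (x y : ℂ) (n : ℕ) : ℂ :=
  ∑ k ∈ Finset.range (n + 1), (qBinom q n k : ℂ) * x ^ k * y ^ (n - k)

/-- The `q`-subtraction power `(x ⊖_q y)^n = ∑_{k=0}^n binom_q(n,k) (-1)^(n-k) x^k y^(n-k)`. -/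
noncomputable def qSubPow (q : ℝ) (x y : ℂ) (n : ℕ) : ℂ :=
  ∑ k ∈ Finset.range (n + 1), (qBinom q n k : ℂ) * (-1 : ℂ) ^ (n - k) * x ^ k * y ^ (n - k)

/-- The `q`-tangent `tan_q(z) = sin_q(z)/cos_q(z)`. -/
noncomputable def qTan (q : ℝ) (z : ℂ) : ℂ := qSin q z / qCos q z

/-- The second `q`-exponential `E_q(z) = ∑ q^(n(n-1)/2) z^n / [n]_q!`. -/
noncomputable def qExpE (q : ℝ) (z : ℂ) : ℂ :=
  ∑' n : ℕ, (q : ℂ) ^ (n * (n - 1) / 2) * z ^ n / (qFact q n : ℂ)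

/-!
Write `binom_q(n,k) / [n]_q^k = (1/[k]_q!) ∏_{j<k} [n-j]_q / [n]_q`. Since `[m]_q → 1/(1-q) ≠ 0`,
each factor of the product tends to `1`, and since `m ↦ [m]_q` is increasing, the product lies in
`[0, 1]`. The ratio `1/[k+1]_q → 1 - q < 1` makes `∑ 1/[k]_q!` converge, so Tannery's theorem
(dominated convergence for series) gives the limit.
-/

open Finset

section

variable {q : ℝ}

lemma qNum_eq_geom_sum (hq : q ≠ 1) (n : ℕ) : qNum q n = ∑ i ∈ range n, q ^ i := by
  rw [geom_sum_eq hq, qNum, ← neg_div_neg_eq]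
  ring_nf

lemma qNum_zero (q : ℝ) : qNum q 0 = 0 := by simp [qNum]

lemma qNum_nonneg (hq0 : 0 ≤ q) (hq1 : q ≠ 1) (n : ℕ) : 0 ≤ qNum q n := by
  rw [qNum_eq_geom_sum hq1]
  positivity

lemma one_le_qNum (hq0 : 0 ≤ q) (hq1 : q ≠ 1) {n : ℕ} (hn : n ≠ 0) : 1 ≤ qNum q n := by
  rw [qNum_eq_geom_sum hq1, ← pow_zero q]
  exact single_le_sum (fun i _ ↦ pow_nonneg hq0 i) (mem_range.2 (Nat.pos_of_ne_zero hn))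

lemma qNum_mono (hq0 : 0 ≤ q) (hq1 : q ≠ 1) : Monotone (qNum q) := fun m n hmn ↦ by
  simp only [qNum_eq_geom_sum hq1]
  exact sum_le_sum_of_subset_of_nonneg (range_mono hmn) fun i _ _ ↦ pow_nonneg hq0 i

lemma tendsto_qNum (hq : |q| < 1) : Tendsto (qNum q) atTop (𝓝 (1 / (1 - q))) := by
  have h := ((tendsto_pow_atTop_nhds_zero_of_abs_lt_one hq).const_sub 1).div_const (1 - q)
  rwa [sub_zero] at h

lemma qFact_succ (q : ℝ) (n : ℕ) : qFact q (n + 1) = qFact q n * qNum q (n + 1) :=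
  prod_range_succ _ n

lemma qFact_pos (hq0 : 0 ≤ q) (hq1 : q ≠ 1) (n : ℕ) : 0 < qFact q n :=
  prod_pos fun j _ ↦ one_pos.trans_le (one_le_qNum hq0 hq1 j.succ_ne_zero)

lemma qFact_eq_qFact_sub_mul_prod (q : ℝ) {k n : ℕ} (hk : k ≤ n) :
    qFact q n = qFact q (n - k) * ∏ j ∈ range k, qNum q (n - j) := by
  induction k with
  | zero => simp
  | succ k ih =>
    have hnk : n - k = n - (k + 1) + 1 := by omega
    rw [ih (by omega), prod_range_succ, hnk, qFact_succ, ← hnk]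
    ring

lemma summable_one_div_qFact (hq0 : 0 < q) (hq1 : q < 1) :
    Summable fun k ↦ 1 / qFact q k := by
  have hq1' : q ≠ 1 := hq1.ne
  refine summable_of_ratio_test_tendsto_lt_one (l := 1 - q) (by linarith)
    (.of_forall fun k ↦ (one_div_pos.2 (qFact_pos hq0.le hq1' k)).ne') ?_
  have hratio : ∀ k, ‖1 / qFact q (k + 1)‖ / ‖1 / qFact q k‖ = 1 / qNum q (k + 1) := fun k ↦ by
    have := qFact_pos hq0.le hq1' k
    have := qFact_pos hq0.le hq1' (k + 1)
    have := one_le_qNum hq0.le hq1' k.succ_ne_zero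
    rw [Real.norm_of_nonneg (by positivity), Real.norm_of_nonneg (by positivity), qFact_succ]
    field_simp
  simp only [hratio]
  have hlim := ((tendsto_qNum (abs_lt.2 ⟨by linarith, hq1⟩)).comp (tendsto_add_atTop_nat 1)).inv₀
    (one_div_pos.2 (sub_pos.2 hq1)).ne'
  simpa [Function.comp_def] using hlim

/-- For `k ≤ n` this is `binom_q(n,k) (1/[n]_q)^k`; for `k > n` the product contains the factor
`[0]_q = 0`, so the finite sum over `k ≤ n` becomes a series over all `k`. -/
noncomputable def daeheeTerm (q : ℝ) (n k : ℕ) : ℝ :=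
  1 / qFact q k * ∏ j ∈ range k, qNum q (n - j) / qNum q n

lemma qBinom_mul_one_div_qNum_pow (hq0 : 0 ≤ q) (hq1 : q ≠ 1) {n k : ℕ} (hk : k ≤ n) :
    qBinom q n k * (1 / qNum q n) ^ k = daeheeTerm q n k := by
  have := qFact_pos hq0 hq1 k
  have := qFact_pos hq0 hq1 (n - k)
  rw [daeheeTerm, qBinom, qFact_eq_qFact_sub_mul_prod q hk, prod_div_distrib, prod_const,
    card_range, one_div_pow, mul_one_div]
  field_simp

lemma daeheeTerm_of_lt {n k : ℕ} (h : n < k) : daeheeTerm q n k = 0 := by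
  rw [daeheeTerm, prod_eq_zero (mem_range.2 h) (by rw [Nat.sub_self, qNum_zero, zero_div]),
    mul_zero]

lemma daeheeTerm_nonneg (hq0 : 0 ≤ q) (hq1 : q ≠ 1) (n k : ℕ) : 0 ≤ daeheeTerm q n k := by
  have := qFact_pos hq0 hq1 k
  exact mul_nonneg (by positivity)
    (prod_nonneg fun j _ ↦ div_nonneg (qNum_nonneg hq0 hq1 _) (qNum_nonneg hq0 hq1 n))

lemma daeheeTerm_le (hq0 : 0 ≤ q) (hq1 : q ≠ 1) (n k : ℕ) :
    daeheeTerm q n k ≤ 1 / qFact q k := by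
  have := qFact_pos hq0 hq1 k
  refine mul_le_of_le_one_right (by positivity) (prod_le_one (fun j _ ↦ ?_) fun j _ ↦ ?_)
  · exact div_nonneg (qNum_nonneg hq0 hq1 _) (qNum_nonneg hq0 hq1 n)
  · exact div_le_one_of_le₀ (qNum_mono hq0 hq1 (n.sub_le j)) (qNum_nonneg hq0 hq1 n)

lemma tendsto_daeheeTerm (hq : |q| < 1) (k : ℕ) :
    Tendsto (fun n ↦ daeheeTerm q n k) atTop (𝓝 (1 / qFact q k)) := by
  have hL : 1 / (1 - q) ≠ 0 := (one_div_pos.2 (sub_pos.2 (abs_lt.1 hq).2)).ne'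
  have hratio : ∀ j, Tendsto (fun n ↦ qNum q (n - j) / qNum q n) atTop (𝓝 1) := fun j ↦ by
    rw [← div_self hL]
    exact ((tendsto_qNum hq).comp (tendsto_sub_atTop_nat j)).div (tendsto_qNum hq) hL
  have h := (tendsto_finsetProd (range k) fun j _ ↦ hratio j).const_mul (1 / qFact q k)
  rwa [prod_const_one, mul_one] at h

lemma sum_range_qBinom_eq_tsum (hq0 : 0 ≤ q) (hq1 : q ≠ 1) (n : ℕ) :
    ∑ k ∈ range (n + 1), qBinom q n k * (1 / qNum q n) ^ k = ∑' k, daeheeTerm q n k := by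
  rw [tsum_eq_sum (s := range (n + 1)) fun k hk ↦ daeheeTerm_of_lt (by simpa using hk)]
  exact sum_congr rfl fun k hk ↦
    qBinom_mul_one_div_qNum_pow hq0 hq1 (Nat.lt_succ_iff.1 (mem_range.1 hk))

end

/-- The Daehee constant: the limit of the q-addition powers `(1 ⊕_q 1/[n]_q)^n`
exists and equals the convergent series `∑ 1/[k]_q!`. -/
theorem daehee_constant (q : ℝ) (hq0 : 0 < q) (hq1 : q < 1) :
    Summable (fun k : ℕ => 1 / qFact q k) ∧
    Filter.Tendsto
      (fun n : ℕ => ∑ k ∈ Finset.range (n + 1), qBinom q n k * (1 / qNum q n) ^ k)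
      Filter.atTop (nhds (∑' k : ℕ, 1 / qFact q k)) := by
  have hsum := summable_one_div_qFact hq0 hq1
  refine ⟨hsum, ?_⟩
  simp only [sum_range_qBinom_eq_tsum hq0.le hq1.ne]
  refine tendsto_tsum_of_dominated_convergence hsum (tendsto_daeheeTerm ?_) (.of_forall ?_)
  · exact abs_lt.2 ⟨by linarith, hq1⟩
  · intro n k
    rw [Real.norm_of_nonneg (daeheeTerm_nonneg hq0.le hq1.ne n k)]
    exact daeheeTerm_le hq0.le hq1.ne n k
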